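/- arXiv:2001.06194 — 2 statements merged into one kernel-verified Lean document; each statement's English description precedes it below -/
import Mathlib

section
/- Let z_1,…,z_m ∈ R^p satisfy λ_max(m⁻¹ Σ_{i=1}^m z_i z_iᵀ) ≤ C₁ and sup_{‖α₁‖=‖α₂‖=1} Σ_{i=1}^m (α₁ᵀz_i)²(α₂ᵀz_i)² ≤ C₂·m. Let w : R → R be differentiable with |w′(s)| ≤ L for all s on the segments {z_iᵀ(β₀ + t(β − β₀)) : t ∈ [0,1]}, i = 1,…,m. Then every eigenvalue λ of the symmetric matrix Σ_{i=1}^m z_i [w(z_iᵀβ) − w(z_iᵀβ₀)] z_iᵀ satisfies |λ| ≤ L √(C₁ C₂) · m · ‖β − β₀‖; in particular, if ‖β − β₀‖ ≤ c√(p/m) then |λ| ≤ c·L·√(C₁ C₂ p m). -/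
/-!
For a unit eigenvector `u` of `D = ∑ dᵢ zᵢzᵢᵀ`, `dᵢ = w(zᵢᵀβ) - w(zᵢᵀβ₀)`, the eigenvalue is the
Rayleigh quotient `uᵀDu = ∑ dᵢ (zᵢᵀu)²`, and the mean value theorem gives `|dᵢ| ≤ L |zᵢᵀΔ|` with
`Δ = β - β₀`. Cauchy–Schwarz bounds `∑ |zᵢᵀΔ| (zᵢᵀu)²` by
`√(∑ (zᵢᵀΔ)² (zᵢᵀu)²) · √(∑ (zᵢᵀu)²) ≤ √(C₂ m ‖Δ‖²) · √(C₁ m)`, where the fourth-moment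
condition is extended from unit vectors to `Δ` by homogeneity.
-/

open Matrix
open scoped BigOperators

noncomputable section

namespace GLMPaper

/-- Squared Euclidean norm of a finite real vector. -/
def sqNorm {m : ℕ} (x : Fin m → ℝ) : ℝ := ∑ i, x i ^ 2

/-- Euclidean norm of a finite real vector. -/
def eNorm {m : ℕ} (x : Fin m → ℝ) : ℝ := Real.sqrt (sqNorm x)

section Norms

variable {n : ℕ}

lemma sqNorm_eq_dotProduct (x : Fin n → ℝ) : sqNorm x = x ⬝ᵥ x := by
  simp only [sqNorm, dotProduct, sq]

lemma sqNorm_nonneg (x : Fin n → ℝ) : 0 ≤ sqNorm x :=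
  Finset.sum_nonneg fun i _ => sq_nonneg (x i)

lemma sqNorm_eq_zero {x : Fin n → ℝ} : sqNorm x = 0 ↔ x = 0 := by
  rw [sqNorm_eq_dotProduct, dotProduct_self_eq_zero]

lemma sqNorm_smul (a : ℝ) (x : Fin n → ℝ) : sqNorm (a • x) = a ^ 2 * sqNorm x := by
  simp only [sqNorm, Pi.smul_apply, smul_eq_mul, mul_pow, Finset.mul_sum]

lemma eNorm_sq (x : Fin n → ℝ) : eNorm x ^ 2 = sqNorm x :=
  Real.sq_sqrt (sqNorm_nonneg x)

lemma le_mul_sqNorm_of_le_of_sqNorm_eq_one {g : (Fin n → ℝ) → ℝ} {K : ℝ}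
    (hg : ∀ (a : ℝ) v, g (a • v) = a ^ 2 * g v) (hK : ∀ v, sqNorm v = 1 → g v ≤ K)
    (v : Fin n → ℝ) : g v ≤ K * sqNorm v := by
  rcases eq_or_ne v 0 with rfl | hv
  · have hg₀ : g 0 = 0 := by simpa using hg 0 0
    simp [hg₀, sqNorm]
  have hr : 0 < eNorm v :=
    Real.sqrt_pos.2 ((sqNorm_nonneg v).lt_of_ne (Ne.symm (sqNorm_eq_zero.not.2 hv)))
  have hunit : sqNorm ((eNorm v)⁻¹ • v) = 1 := by
    rw [sqNorm_smul, ← eNorm_sq, inv_pow, inv_mul_cancel₀ (by positivity)]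
  calc g v = eNorm v ^ 2 * g ((eNorm v)⁻¹ • v) := by
        rw [hg, ← mul_assoc, ← mul_pow, mul_inv_cancel₀ hr.ne', one_pow, one_mul]
    _ ≤ eNorm v ^ 2 * K := mul_le_mul_of_nonneg_left (hK _ hunit) (sq_nonneg _)
    _ = K * sqNorm v := by rw [eNorm_sq, mul_comm]

end Norms

lemma abs_eigenvalues_le_of_abs_dotProduct_mulVec_le {n : ℕ} {A : Matrix (Fin n) (Fin n) ℝ}
    (hA : A.IsHermitian) {K : ℝ} (h : ∀ u, sqNorm u = 1 → |u ⬝ᵥ (A *ᵥ u)| ≤ K) (j : Fin n) :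
    |hA.eigenvalues j| ≤ K := by
  have hunit : sqNorm ⇑(hA.eigenvectorBasis j) = 1 := by
    have h := real_inner_self_eq_norm_sq (hA.eigenvectorBasis j)
    rw [hA.eigenvectorBasis.orthonormal.1 j, EuclideanSpace.inner_eq_star_dotProduct] at h
    simpa [sqNorm_eq_dotProduct] using h
  simpa [hA.eigenvalues_eq j] using h _ hunit

lemma dotProduct_sum_smul_vecMulVec_self_mulVec {ι n R : Type*} [Fintype ι] [Fintype n]
    [CommRing R] (z : ι → n → R) (d : ι → R) (u : n → R) :
    u ⬝ᵥ ((∑ i, d i • vecMulVec (z i) (z i)) *ᵥ u) = ∑ i, d i * (z i ⬝ᵥ u) ^ 2 := by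
  simp only [sum_mulVec, smul_mulVec, vecMulVec_mulVec, op_smul_eq_smul, smul_smul,
    dotProduct_sum, dotProduct_smul, smul_eq_mul]
  exact Finset.sum_congr rfl fun i _ => by rw [dotProduct_comm u]; ring

lemma dotProduct_sum_vecMulVec_self_mulVec {ι n R : Type*} [Fintype ι] [Fintype n]
    [CommRing R] (z : ι → n → R) (u : n → R) :
    u ⬝ᵥ ((∑ i, vecMulVec (z i) (z i)) *ᵥ u) = ∑ i, (z i ⬝ᵥ u) ^ 2 := by
  simpa only [Pi.one_apply, one_smul, one_mul] using dotProduct_sum_smul_vecMulVec_self_mulVec z 1 u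

lemma sum_sq_mul_sq_dotProduct_le {ι : Type*} [Fintype ι] {n : ℕ} {z : ι → Fin n → ℝ} {K : ℝ}
    (hK : ∀ α₁ α₂ : Fin n → ℝ, sqNorm α₁ = 1 → sqNorm α₂ = 1 →
      ∑ i, (α₁ ⬝ᵥ z i) ^ 2 * (α₂ ⬝ᵥ z i) ^ 2 ≤ K)
    {u : Fin n → ℝ} (hu : sqNorm u = 1) (v : Fin n → ℝ) :
    ∑ i, (z i ⬝ᵥ v) ^ 2 * (z i ⬝ᵥ u) ^ 2 ≤ K * sqNorm v := by
  refine le_mul_sqNorm_of_le_of_sqNorm_eq_one (g := fun v => ∑ i, (z i ⬝ᵥ v) ^ 2 * (z i ⬝ᵥ u) ^ 2)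
    (fun a v => ?_) (fun v hv => ?_) v
  · simp only [dotProduct_smul, smul_eq_mul, Finset.mul_sum]
    exact Finset.sum_congr rfl fun i _ => by ring
  · simpa only [dotProduct_comm (z _)] using hK v u hv hu

lemma abs_sub_le_of_abs_deriv_le {f : ℝ → ℝ} (hf : Differentiable ℝ f) {x y L : ℝ}
    (hL : ∀ t ∈ Set.Icc (0 : ℝ) 1, |deriv f (x + t * (y - x))| ≤ L) :
    |f y - f x| ≤ L * |y - x| := by
  have hseg : ∀ s ∈ segment ℝ x y, ‖deriv f s‖ ≤ L := by
    rw [segment_eq_image']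
    rintro _ ⟨t, ht, rfl⟩
    exact hL t ht
  exact (convex_segment x y).norm_image_sub_le_of_norm_deriv_le (fun s _ => hf s) hseg
    (left_mem_segment ℝ x y) (right_mem_segment ℝ x y)

lemma abs_sub_comp_dotProduct_le {n : Type*} [Fintype n] {f : ℝ → ℝ} (hf : Differentiable ℝ f)
    {x β β₀ : n → ℝ} {L : ℝ}
    (hL : ∀ t ∈ Set.Icc (0 : ℝ) 1, |deriv f (x ⬝ᵥ (β₀ + t • (β - β₀)))| ≤ L) :
    |f (x ⬝ᵥ β) - f (x ⬝ᵥ β₀)| ≤ L * |x ⬝ᵥ (β - β₀)| := by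
  simpa only [dotProduct_sub] using abs_sub_le_of_abs_deriv_le hf fun t ht => by
    simpa only [dotProduct_add, dotProduct_smul, dotProduct_sub, smul_eq_mul] using hL t ht

lemma abs_sum_mul_sq_le {ι : Type*} [Fintype ι] {d a b : ι → ℝ} {L : ℝ} (hL : 0 ≤ L)
    (hd : ∀ i, |d i| ≤ L * |a i|) :
    |∑ i, d i * b i ^ 2| ≤ L * (√(∑ i, a i ^ 2 * b i ^ 2) * √(∑ i, b i ^ 2)) := by
  calc |∑ i, d i * b i ^ 2| ≤ ∑ i, |d i| * b i ^ 2 :=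
        (Finset.abs_sum_le_sum_abs _ _).trans_eq (by simp only [abs_mul, abs_pow, sq_abs])
    _ ≤ ∑ i, L * (|a i * b i| * |b i|) := Finset.sum_le_sum fun i _ => by
        rw [abs_mul, mul_assoc, ← sq, sq_abs, ← mul_assoc]
        exact mul_le_mul_of_nonneg_right (hd i) (sq_nonneg _)
    _ = L * ∑ i, |a i * b i| * |b i| := (Finset.mul_sum _ _ _).symm
    _ ≤ L * (√(∑ i, |a i * b i| ^ 2) * √(∑ i, |b i| ^ 2)) :=
        mul_le_mul_of_nonneg_left (Real.sum_mul_le_sqrt_mul_sqrt _ _ _) hL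
    _ = L * (√(∑ i, a i ^ 2 * b i ^ 2) * √(∑ i, b i ^ 2)) := by
        simp only [sq_abs, mul_pow]

lemma abs_dotProduct_weighted_gram_mulVec_le {ι : Type*} [Fintype ι] {n : ℕ}
    (z : ι → Fin n → ℝ) {d : ι → ℝ} {u Δ : Fin n → ℝ} {L A B : ℝ} (hL : 0 ≤ L)
    (hd : ∀ i, |d i| ≤ L * |z i ⬝ᵥ Δ|) (hA : ∑ i, (z i ⬝ᵥ u) ^ 2 ≤ A)
    (hB : ∑ i, (z i ⬝ᵥ Δ) ^ 2 * (z i ⬝ᵥ u) ^ 2 ≤ B * sqNorm Δ) :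
    |u ⬝ᵥ ((∑ i, d i • vecMulVec (z i) (z i)) *ᵥ u)| ≤ L * √(A * B) * eNorm Δ := by
  have hB₀ : 0 ≤ B * sqNorm Δ := (Finset.sum_nonneg fun i _ => by positivity).trans hB
  rw [dotProduct_sum_smul_vecMulVec_self_mulVec]
  calc _ ≤ L * (√(∑ i, (z i ⬝ᵥ Δ) ^ 2 * (z i ⬝ᵥ u) ^ 2) * √(∑ i, (z i ⬝ᵥ u) ^ 2)) :=
        abs_sum_mul_sq_le hL hd
    _ ≤ L * (√(B * sqNorm Δ) * √A) := by gcongr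
    _ = L * √(A * B) * eNorm Δ := by
        rw [mul_assoc, eNorm, ← Real.sqrt_mul hB₀, ← Real.sqrt_mul' _ (sqNorm_nonneg Δ)]
        ring_nf

lemma sqrt_mul_mul_mul_eq {a b m : ℝ} (hm : 0 ≤ m) : √(a * m * (b * m)) = √(a * b) * m := by
  rw [show a * m * (b * m) = a * b * m ^ 2 by ring, Real.sqrt_mul' _ (sq_nonneg m),
    Real.sqrt_sq hm]

lemma mul_sqrt_div_eq_sqrt_mul (p : ℝ) {m : ℝ} (hm : 0 ≤ m) : m * √(p / m) = √(p * m) := by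
  rw [Real.sqrt_div' _ hm, mul_div_left_comm, Real.div_sqrt, Real.sqrt_mul' _ hm]

/-- **Eigenvalue perturbation bound (36) of the proofs.**
If `λ_max(m⁻¹ ∑ zᵢzᵢᵀ) ≤ C₁` (in Rayleigh form), the two-vector design condition holds
with constant `C₂`, and `w` is differentiable with `|w'| ≤ L` on the segments
`zᵢᵀ(β₀ + t(β - β₀))`, `t ∈ [0,1]`, then every eigenvalue `λ` of
`∑ zᵢ [w(zᵢᵀβ) - w(zᵢᵀβ₀)] zᵢᵀ` satisfies `|λ| ≤ L √(C₁C₂) m ‖β - β₀‖`; in particular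
if `‖β - β₀‖ ≤ c √(p/m)` then `|λ| ≤ c L √(C₁ C₂ p m)`. -/
theorem weighted_gram_perturbation {m pn : ℕ}
    (z : Fin m → Fin pn → ℝ) (w : ℝ → ℝ) (β β₀ : Fin pn → ℝ) (C₁ C₂ L c : ℝ)
    (hC1 : ∀ x : Fin pn → ℝ,
      x ⬝ᵥ ((∑ i, vecMulVec (z i) (z i)) *ᵥ x) ≤ C₁ * m * sqNorm x)
    (hC2 : ∀ α₁ α₂ : Fin pn → ℝ, sqNorm α₁ = 1 → sqNorm α₂ = 1 →
      ∑ i, (α₁ ⬝ᵥ z i) ^ 2 * (α₂ ⬝ᵥ z i) ^ 2 ≤ C₂ * m)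
    (hw : Differentiable ℝ w)
    (hL : ∀ i, ∀ t ∈ Set.Icc (0:ℝ) 1, |deriv w (z i ⬝ᵥ (β₀ + t • (β - β₀)))| ≤ L)
    (hD : (∑ i, (w (z i ⬝ᵥ β) - w (z i ⬝ᵥ β₀)) • vecMulVec (z i) (z i)).IsHermitian) :
    (∀ j, |hD.eigenvalues j| ≤ L * Real.sqrt (C₁ * C₂) * m * eNorm (β - β₀)) ∧
    (eNorm (β - β₀) ≤ c * Real.sqrt ((pn : ℝ) / (m : ℝ)) →
      ∀ j, |hD.eigenvalues j| ≤ c * L * Real.sqrt (C₁ * C₂ * pn * m)) := by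
  have hL₀ : 0 < m → 0 ≤ L := fun hm => (abs_nonneg _).trans (hL ⟨0, hm⟩ 0 ⟨le_rfl, zero_le_one⟩)
  have hbound : ∀ j, |hD.eigenvalues j| ≤ L * √(C₁ * C₂) * m * eNorm (β - β₀) := by
    refine abs_eigenvalues_le_of_abs_dotProduct_mulVec_le hD fun u hu => ?_
    rcases Nat.eq_zero_or_pos m with rfl | hm
    · simp
    have hA : ∑ i, (z i ⬝ᵥ u) ^ 2 ≤ C₁ * m := by
      simpa [dotProduct_sum_vecMulVec_self_mulVec, hu] using hC1 u
    calc _ ≤ L * √(C₁ * m * (C₂ * m)) * eNorm (β - β₀) :=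
          abs_dotProduct_weighted_gram_mulVec_le z (hL₀ hm)
            (fun i => abs_sub_comp_dotProduct_le hw (hL i)) hA
            (sum_sq_mul_sq_dotProduct_le hC2 hu _)
      _ = L * √(C₁ * C₂) * m * eNorm (β - β₀) := by
          rw [sqrt_mul_mul_mul_eq m.cast_nonneg]
          ring
  refine ⟨hbound, fun hsmall j => (hbound j).trans ?_⟩
  have hLm : 0 ≤ L * √(C₁ * C₂) * m := by
    rcases Nat.eq_zero_or_pos m with rfl | hm
    · simp
    exact mul_nonneg (mul_nonneg (hL₀ hm) (Real.sqrt_nonneg _)) m.cast_nonneg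
  calc _ ≤ L * √(C₁ * C₂) * m * (c * √(pn / m)) := mul_le_mul_of_nonneg_left hsmall hLm
    _ = c * L * (√(C₁ * C₂) * (m * √(pn / m))) := by ring
    _ = c * L * √(C₁ * C₂ * pn * m) := by
        rw [mul_sqrt_div_eq_sqrt_mul _ m.cast_nonneg, ← Real.sqrt_mul' _ (by positivity),
          mul_assoc (C₁ * C₂)]

end GLMPaper
end
end

section
/- Let (e_i)_{i≥1} be independent mean-zero random variables such that the family {e_i² : i ≥ 1} is uniformly integrable, and for each n let real constants a_{n1},…,a_{nn} satisfy Σ_{i=1}^n a_{ni}² ≤ M < ∞ for all n and max_{1≤i≤n} |a_{ni}| → 0 as n → ∞. Then for every ε > 0 the Lindeberg quantity f_n(ε) = Σ_{i=1}^n a_{ni}² E[e_i² · 1{|a_{ni} e_i| > ε}] converges to 0 as n → ∞; i.e., the triangular array ξ_{ni} = a_{ni} e_i satisfies the Lindeberg condition. -/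
open Filter MeasureTheory ProbabilityTheory Finset
open scoped BigOperators Topology

noncomputable section

namespace GLMPaper

/-- **The Lindeberg condition (26) of the proofs.**
Let `(eᵢ)` be independent mean-zero random variables such that `{eᵢ² : i}` is uniformly
integrable, and let the triangular array of coefficients `a n i` satisfy
`∑_{i<n} (a n i)² ≤ M` and `max_{i<n} |a n i| → 0`.  Then for every `ε > 0` the Lindeberg
quantity `fₙ(ε) = ∑_{i<n} (a n i)² E[eᵢ² 1{|a n i ⬝ eᵢ| > ε}]` converges to `0`; i.e. the
array `ξ_{n i} = a n i ⬝ eᵢ` satisfies the Lindeberg condition. -/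
theorem lindeberg_condition
    {Ω : Type*} [MeasurableSpace Ω] (P : Measure Ω) [IsProbabilityMeasure P]
    (e : ℕ → Ω → ℝ) (a : ℕ → ℕ → ℝ) (M : ℝ)
    (hmeas : ∀ i, Measurable (e i))
    (hint : ∀ i, Integrable (e i) P)
    (hmean : ∀ i, ∫ ω, e i ω ∂P = 0)
    (hindep : iIndepFun e P)
    (hUI : ∀ ε : ℝ, 0 < ε → ∃ C : ℝ, ∀ i,
      ∫ ω in {ω | C < (e i ω) ^ 2}, (e i ω) ^ 2 ∂P ≤ ε)
    (hsum : ∀ n, ∑ i ∈ Finset.range n, (a n i) ^ 2 ≤ M)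
    (hmax : ∀ δ : ℝ, 0 < δ → ∀ᶠ n in atTop, ∀ i ∈ Finset.range n, |a n i| ≤ δ) :
    ∀ ε : ℝ, 0 < ε →
      Tendsto (fun n => ∑ i ∈ Finset.range n,
          (a n i) ^ 2 * ∫ ω in {ω | ε < |a n i * e i ω|}, (e i ω) ^ 2 ∂P)
        atTop (𝓝 0) := by
  intro ε hε
  rw [NormedAddCommGroup.tendsto_nhds_zero]
  intro η hη
  have hM0 : 0 ≤ M := le_trans (by simp) (hsum 0)
  set η' : ℝ := η / (2 * (M + 1)) with hη'def
  have hη' : 0 < η' := div_pos hη (by linarith)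
  obtain ⟨C, hC⟩ := hUI η' hη'
  set K : ℝ := max C 0 + 1 with hKdef
  have hK : 0 < K := by positivity
  set δ : ℝ := ε / Real.sqrt K with hδdef
  have hδ : 0 < δ := div_pos hε (Real.sqrt_pos.2 hK)
  have hδ2 : δ ^ 2 = ε ^ 2 / K := by
    rw [hδdef, div_pow, Real.sq_sqrt hK.le]
  filter_upwards [hmax δ hδ] with n hn
  have hterm : ∀ i ∈ Finset.range n,
      (a n i) ^ 2 * ∫ ω in {ω | ε < |a n i * e i ω|}, (e i ω) ^ 2 ∂P
        ≤ (a n i) ^ 2 * η' := by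
    intro i hi
    by_cases ha : a n i = 0
    · simp [ha]
    · have hameas : MeasurableSet {ω | ε < |a n i * e i ω|} :=
        measurableSet_lt measurable_const ((measurable_const.mul (hmeas i)).abs)
      have hTmeas : MeasurableSet {ω | C < (e i ω) ^ 2} :=
        measurableSet_lt measurable_const ((hmeas i).pow_const 2)
      have hsub : {ω | ε < |a n i * e i ω|} ⊆ {ω | C < (e i ω) ^ 2} := by
        intro ω hω
        simp only [Set.mem_setOf_eq] at hω ⊢
        have h1 : ε < |a n i| * |e i ω| := by rwa [← abs_mul]
        have h2 : |a n i| ≤ δ := hn i hi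
        have h3 : ε < δ * |e i ω| :=
          lt_of_lt_of_le h1 (mul_le_mul_of_nonneg_right h2 (abs_nonneg _))
        have h4 : ε ^ 2 < δ ^ 2 * (e i ω) ^ 2 := by
          have := sq_abs (e i ω)
          nlinarith [abs_nonneg (e i ω), hε]
        have h5 : K < (e i ω) ^ 2 := by
          rw [hδ2] at h4
          have : ε ^ 2 < ε ^ 2 / K * (e i ω) ^ 2 := h4
          have hε2 : 0 < ε ^ 2 := by positivity
          rw [div_mul_eq_mul_div, lt_div_iff₀ hK] at this
          nlinarith
        have : C < K := by
          have := le_max_left C (0:ℝ); simp only [hKdef]; linarith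
        linarith
      have hIle : (∫ ω in {ω | ε < |a n i * e i ω|}, (e i ω) ^ 2 ∂P) ≤ η' := by
        by_cases hInt : IntegrableOn (fun ω => (e i ω) ^ 2) {ω | C < (e i ω) ^ 2} P
        · calc (∫ ω in {ω | ε < |a n i * e i ω|}, (e i ω) ^ 2 ∂P)
              ≤ ∫ ω in {ω | C < (e i ω) ^ 2}, (e i ω) ^ 2 ∂P := by
                apply setIntegral_mono_set hInt
                · exact Filter.Eventually.of_forall (fun ω => sq_nonneg _)
                · exact HasSubset.Subset.eventuallyLE hsub
            _ ≤ η' := hC i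
        · -- e i ^ 2 is not integrable on the larger set; show it is not
          -- integrable on the smaller one either, so the integral is 0.
          have hnotS : ¬ IntegrableOn (fun ω => (e i ω) ^ 2)
              {ω | ε < |a n i * e i ω|} P := by
            intro hS
            apply hInt
            -- the complement part {C < e²} \ {ε < |a e|} is bounded
            have hbdd : IntegrableOn (fun ω => (e i ω) ^ 2)
                {ω | (e i ω) ^ 2 ≤ (ε / |a n i|) ^ 2} P := by
              have hmS : MeasurableSet {ω | (e i ω) ^ 2 ≤ (ε / |a n i|) ^ 2} :=
                measurableSet_le ((hmeas i).pow_const 2) measurable_const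
              refine Integrable.mono' (integrable_const ((ε / |a n i|) ^ 2))
                (((hmeas i).pow_const 2).aestronglyMeasurable.restrict) ?_
              rw [ae_restrict_iff' hmS]
              refine Filter.Eventually.of_forall (fun ω hω => ?_)
              simpa [abs_of_nonneg (sq_nonneg (e i ω))] using hω
            have hcover : {ω | C < (e i ω) ^ 2} ⊆
                {ω | ε < |a n i * e i ω|} ∪ {ω | (e i ω) ^ 2 ≤ (ε / |a n i|) ^ 2} := by
              intro ω _
              by_cases h : ε < |a n i * e i ω|
              · exact Or.inl h
              · right
                push_neg at h
                have ha' : 0 < |a n i| := abs_pos.2 ha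
                have : |e i ω| ≤ ε / |a n i| := by
                  rw [le_div_iff₀ ha', mul_comm]
                  rwa [abs_mul] at h
                have h0 : 0 ≤ |e i ω| := abs_nonneg _
                simp only [Set.mem_setOf_eq]
                calc (e i ω) ^ 2 = |e i ω| ^ 2 := (sq_abs _).symm
                  _ ≤ (ε / |a n i|) ^ 2 := by nlinarith
            exact (hS.union hbdd).mono_set hcover
          rw [MeasureTheory.integral_undef hnotS]
          exact hη'.le
      exact mul_le_mul_of_nonneg_left hIle (sq_nonneg _)
  have hnonneg : 0 ≤ ∑ i ∈ Finset.range n,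
      (a n i) ^ 2 * ∫ ω in {ω | ε < |a n i * e i ω|}, (e i ω) ^ 2 ∂P := by
    apply Finset.sum_nonneg
    intro i _
    exact mul_nonneg (sq_nonneg _) (integral_nonneg (fun ω => sq_nonneg _))
  rw [Real.norm_eq_abs, abs_of_nonneg hnonneg]
  calc ∑ i ∈ Finset.range n,
        (a n i) ^ 2 * ∫ ω in {ω | ε < |a n i * e i ω|}, (e i ω) ^ 2 ∂P
      ≤ ∑ i ∈ Finset.range n, (a n i) ^ 2 * η' := Finset.sum_le_sum hterm
    _ = (∑ i ∈ Finset.range n, (a n i) ^ 2) * η' := by rw [Finset.sum_mul]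
    _ ≤ M * η' := mul_le_mul_of_nonneg_right (hsum n) hη'.le
    _ < η := by
        rw [hη'def]
        rw [mul_div_assoc']
        rw [div_lt_iff₀ (by linarith : (0:ℝ) < 2 * (M + 1))]
        nlinarith

end GLMPaper
end
end
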